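/- arXiv:2502.06356 — 2 statements merged into one kernel-verified Lean document; each statement's English description precedes it below -/
import Mathlib

section
/- Let λ be a finite Borel measure on a standard Borel space A. Then there exist a finite Borel measure λ' on ℝ and a Borel measurable map π : ℝ → A such that λ is the pushforward of λ' under π and λ' has no atoms, i.e., λ'({r}) = 0 for every r ∈ ℝ. -/
/-!
Put an atomless probability measure `ν` on a second factor: `μ` is the first marginal of
`μ.prod ν`, which has no atoms. Since `ν` has no atoms its space is uncountable, hence so is the
product, and the Borel isomorphism theorem transports `μ.prod ν` to the space of `ν`.
-/

open MeasureTheory ProbabilityTheory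

namespace MeasureTheory

variable {α β : Type*} [MeasurableSpace α] [MeasurableSpace β]

lemma MeasurableEmbedding.nullSingletonClass_map {f : α → β} (hf : MeasurableEmbedding f)
    (μ : Measure α) [NullSingletonClass μ] : NullSingletonClass (μ.map f) :=
  ⟨fun y => by
    rw [hf.map_apply]
    exact (Set.subsingleton_singleton.preimage hf.injective).measure_zero μ⟩

lemma not_countable_of_nullSingletonClass (μ : Measure α) [NeZero μ] [NullSingletonClass μ] :
    ¬Countable α := fun _ =>
  NeZero.ne μ (Measure.measure_univ_eq_zero.mp (Set.countable_univ.measure_zero μ))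

lemma exists_nullSingletonClass_map_eq [StandardBorelSpace α] [Nonempty α]
    [StandardBorelSpace β] (μ : Measure α) (ν : Measure β) [IsProbabilityMeasure ν]
    [NullSingletonClass ν] :
    ∃ (μ' : Measure β) (π : β → α), Measurable π ∧ μ = μ'.map π ∧ NullSingletonClass μ' := by
  have hβ : ¬Countable β := not_countable_of_nullSingletonClass ν
  have hαβ : ¬Countable (α × β) := fun _ => hβ (Prod.snd_surjective (α := α)).countable
  let e : α × β ≃ᵐ β := PolishSpace.measurableEquivOfNotCountable hαβ hβ
  refine ⟨(μ.prod ν).map e, Prod.fst ∘ e.symm, measurable_fst.comp e.symm.measurable, ?_,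
    e.measurableEmbedding.nullSingletonClass_map _⟩
  have hcomp : (Prod.fst ∘ e.symm) ∘ e = Prod.fst := funext fun p => by simp
  rw [Measure.map_map (measurable_fst.comp e.symm.measurable) e.measurable, hcomp,
    measurePreserving_fst.map_eq]

end MeasureTheory

/-- Any finite Borel measure on a (nonempty) standard Borel space is the pushforward
of a nonatomic finite Borel measure on ℝ under a Borel map. -/
theorem stmt_1 {A : Type*} [MeasurableSpace A] [StandardBorelSpace A] [Nonempty A]
    (lam : Measure A) [IsFiniteMeasure lam] :
    ∃ (lam' : Measure ℝ) (π : ℝ → A), IsFiniteMeasure lam' ∧ Measurable π ∧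
      lam = lam'.map π ∧ ∀ r : ℝ, lam' {r} = 0 := by
  have := nullSingletonClass_gaussianReal (μ := 0) one_ne_zero
  obtain ⟨lam', π, hπ, hmap, _⟩ := exists_nullSingletonClass_map_eq lam (gaussianReal 0 1)
  have hfinite : IsFiniteMeasure lam' :=
    ⟨by simpa [hmap, Measure.map_apply hπ MeasurableSet.univ] using measure_lt_top lam .univ⟩
  exact ⟨lam', π, hfinite, hπ, hmap, measure_singleton⟩
end

section
/- Let (f_n) be a sequence of real-valued càdlàg functions on [0,T] that is pointwise nondecreasing in n and converges pointwise to a function f. Suppose f = g − k on [0,T], where g is càdlàg and k is nondecreasing. Then f is càdlàg and k is càdlàg. -/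
open Filter

/-- `f` is càdlàg on `[0,T]`: right-continuous on `[0,T)` and with finite left limits
on `(0,T]`. -/
def CadlagOn (f : ℝ → ℝ) (T : ℝ) : Prop :=
  (∀ t ∈ Set.Ico (0:ℝ) T, Tendsto f (nhdsWithin t (Set.Ioc t T)) (nhds (f t))) ∧
  (∀ t ∈ Set.Ioc (0:ℝ) T, ∃ l : ℝ, Tendsto f (nhdsWithin t (Set.Ico 0 t)) (nhds l))

/-- Peng's monotone limit lemma: if càdlàg functions `fₙ` increase pointwise to `f` on
`[0,T]`, and `f = g − k` with `g` càdlàg and `k` nondecreasing on `[0,T]`, then `f` and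
`k` are càdlàg on `[0,T]`. -/
theorem stmt_13 (T : ℝ) (hT : 0 < T)
    (fseq : ℕ → ℝ → ℝ) (f g k : ℝ → ℝ)
    (hcadlag : ∀ n, CadlagOn (fseq n) T)
    (hmono : ∀ t ∈ Set.Icc (0:ℝ) T, Monotone fun n => fseq n t)
    (hlim : ∀ t ∈ Set.Icc (0:ℝ) T, Tendsto (fun n => fseq n t) atTop (nhds (f t)))
    (hg : CadlagOn g T)
    (hk : MonotoneOn k (Set.Icc (0:ℝ) T))
    (hdec : ∀ t ∈ Set.Icc (0:ℝ) T, f t = g t - k t) :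
    CadlagOn f T ∧ CadlagOn k T := by
  -- Monotone extension of `k` to all of `ℝ`.
  set K : ℝ → ℝ := fun s => k (max 0 (min s T)) with hKdef
  have hmem : ∀ s : ℝ, max 0 (min s T) ∈ Set.Icc (0:ℝ) T := fun s =>
    ⟨le_max_left _ _, max_le hT.le (min_le_right _ _)⟩
  have hKmono : Monotone K := fun s s' hss' =>
    hk (hmem s) (hmem s') (max_le_max le_rfl (min_le_min hss' le_rfl))
  have hKeq : ∀ x ∈ Set.Icc (0:ℝ) T, K x = k x := by
    intro x hx
    simp only [hKdef]
    rw [min_eq_left hx.2, max_eq_right hx.1]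
  -- Filter identifications.
  have hright : ∀ t ∈ Set.Ico (0:ℝ) T,
      nhdsWithin t (Set.Ioc t T) = nhdsWithin t (Set.Ioi t) := by
    intro t ht
    have h1 : Set.Ioc t T = Set.Ioi t ∩ Set.Iic T := (Set.Ioi_inter_Iic).symm
    rw [h1, nhdsWithin_inter_of_mem'
      (mem_nhdsWithin_of_mem_nhds (Iic_mem_nhds ht.2))]
  have hleft : ∀ t ∈ Set.Ioc (0:ℝ) T,
      nhdsWithin t (Set.Ico 0 t) = nhdsWithin t (Set.Iio t) := by
    intro t ht
    have h1 : Set.Ico 0 t = Set.Iio t ∩ Set.Ici 0 := by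
      rw [Set.inter_comm, Set.Ici_inter_Iio]
    rw [h1, nhdsWithin_inter_of_mem'
      (mem_nhdsWithin_of_mem_nhds (Ici_mem_nhds ht.1))]
  -- Eventual agreement of `k` with `K` on the relevant filters.
  have hsubR : ∀ t ∈ Set.Ico (0:ℝ) T, Set.Ioc t T ⊆ Set.Icc 0 T := fun t ht x hx =>
    ⟨ht.1.trans hx.1.le, hx.2⟩
  have hsubL : ∀ t ∈ Set.Ioc (0:ℝ) T, Set.Ico 0 t ⊆ Set.Icc 0 T := fun t ht x hx =>
    ⟨hx.1, hx.2.le.trans ht.2⟩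
  -- right limits of `k`
  have hkright : ∀ t ∈ Set.Ico (0:ℝ) T,
      Tendsto k (nhdsWithin t (Set.Ioc t T)) (nhds (sInf (K '' Set.Ioi t))) := by
    intro t ht
    have hbdd : BddBelow (K '' Set.Ioi t) := by
      refine ⟨K t, ?_⟩
      rintro y ⟨x, hx, rfl⟩
      exact hKmono (le_of_lt hx)
    have hK : Tendsto K (nhdsWithin t (Set.Ioc t T)) (nhds (sInf (K '' Set.Ioi t))) := by
      rw [hright t ht]
      exact hKmono.tendsto_nhdsGT t
    refine hK.congr' ?_
    filter_upwards [self_mem_nhdsWithin] with x hx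
    exact hKeq x (hsubR t ht hx)
  -- left limits of `k`
  have hkleft : ∀ t ∈ Set.Ioc (0:ℝ) T,
      Tendsto k (nhdsWithin t (Set.Ico 0 t)) (nhds (sSup (K '' Set.Iio t))) := by
    intro t ht
    have hK : Tendsto K (nhdsWithin t (Set.Ico 0 t)) (nhds (sSup (K '' Set.Iio t))) := by
      rw [hleft t ht]
      exact hKmono.tendsto_nhdsLT t
    refine hK.congr' ?_
    filter_upwards [self_mem_nhdsWithin] with x hx
    exact hKeq x (hsubL t ht hx)
  -- `k t ≤` right limit of `k` at `t`
  have hk_le_right : ∀ t ∈ Set.Ico (0:ℝ) T, k t ≤ sInf (K '' Set.Ioi t) := by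
    intro t ht
    have hne : (K '' Set.Ioi t).Nonempty := ⟨K (t + 1), ⟨t + 1, by simp, rfl⟩⟩
    refine le_trans (le_of_eq (hKeq t ⟨ht.1, ht.2.le⟩).symm) (le_csInf hne ?_)
    rintro y ⟨x, hx, rfl⟩
    exact hKmono (le_of_lt hx)
  -- `f` tends to `g t - sInf (K '' Ioi t)` from the right
  have hfright : ∀ t ∈ Set.Ico (0:ℝ) T,
      Tendsto f (nhdsWithin t (Set.Ioc t T)) (nhds (g t - sInf (K '' Set.Ioi t))) := by
    intro t ht
    have hgf : Tendsto (fun x => g x - k x) (nhdsWithin t (Set.Ioc t T))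
        (nhds (g t - sInf (K '' Set.Ioi t))) := (hg.1 t ht).sub (hkright t ht)
    refine hgf.congr' ?_
    filter_upwards [self_mem_nhdsWithin] with x hx
    exact (hdec x (hsubR t ht hx)).symm
  -- the right limit of `f` equals `f t`
  have hfval : ∀ t ∈ Set.Ico (0:ℝ) T, g t - sInf (K '' Set.Ioi t) = f t := by
    intro t ht
    have htIcc : t ∈ Set.Icc (0:ℝ) T := ⟨ht.1, ht.2.le⟩
    have hub : g t - sInf (K '' Set.Ioi t) ≤ f t := by
      rw [hdec t htIcc]
      exact sub_le_sub_left (hk_le_right t ht) _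
    have hlb : f t ≤ g t - sInf (K '' Set.Ioi t) := by
      -- each `fseq n t ≤` the right limit of `f`
      have hne : (nhdsWithin t (Set.Ioc t T)).NeBot := by
        rw [hright t ht]
        exact nhdsGT_neBot t
      have hstep : ∀ n, fseq n t ≤ g t - sInf (K '' Set.Ioi t) := by
        intro n
        refine le_of_tendsto_of_tendsto ((hcadlag n).1 t ht) (hfright t ht) ?_
        filter_upwards [self_mem_nhdsWithin] with x hx
        exact Monotone.ge_of_tendsto (hmono x (hsubR t ht hx))
          (hlim x (hsubR t ht hx)) n
      exact le_of_tendsto' (hlim t htIcc) hstep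
    linarith
  -- right continuity of `f` and `k`
  have hfR : ∀ t ∈ Set.Ico (0:ℝ) T,
      Tendsto f (nhdsWithin t (Set.Ioc t T)) (nhds (f t)) := by
    intro t ht
    have := hfright t ht
    rwa [hfval t ht] at this
  have hkR : ∀ t ∈ Set.Ico (0:ℝ) T,
      Tendsto k (nhdsWithin t (Set.Ioc t T)) (nhds (k t)) := by
    intro t ht
    have htIcc : t ∈ Set.Icc (0:ℝ) T := ⟨ht.1, ht.2.le⟩
    have h1 : Tendsto (fun x => g x - f x) (nhdsWithin t (Set.Ioc t T))
        (nhds (g t - f t)) := (hg.1 t ht).sub (hfR t ht)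
    have h2 : g t - f t = k t := by
      rw [hdec t htIcc]; ring
    rw [h2] at h1
    refine h1.congr' ?_
    filter_upwards [self_mem_nhdsWithin] with x hx
    have := hdec x (hsubR t ht hx)
    linarith
  -- left limits of `f`
  have hfL : ∀ t ∈ Set.Ioc (0:ℝ) T, ∃ l : ℝ,
      Tendsto f (nhdsWithin t (Set.Ico 0 t)) (nhds l) := by
    intro t ht
    obtain ⟨lg, hlg⟩ := hg.2 t ht
    refine ⟨lg - sSup (K '' Set.Iio t), ?_⟩
    have h1 : Tendsto (fun x => g x - k x) (nhdsWithin t (Set.Ico 0 t))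
        (nhds (lg - sSup (K '' Set.Iio t))) := hlg.sub (hkleft t ht)
    refine h1.congr' ?_
    filter_upwards [self_mem_nhdsWithin] with x hx
    exact (hdec x (hsubL t ht hx)).symm
  refine ⟨⟨hfR, hfL⟩, ⟨hkR, fun t ht => ⟨_, hkleft t ht⟩⟩⟩
end
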